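/- Let K be a field, q ∈ K, and A a finite-dimensional q-generalized flexible algebra over K with product ·, and suppose the dual space A* carries a q-generalized flexible algebra product ∘. Let L·*, R·* : A → End_K(A*) be the transposes of left and right multiplication by ·, and L∘*, R∘* : A* → End_K(A) the transposes of left and right multiplication by ∘. Then the product on A ⊕ A* defined by (x+a) ⋆ (y+b) := (x·y + R∘*(a)y + L∘*(b)x) + (a∘b + R·*(x)b + L·*(y)a) makes A ⊕ A* a q-generalized flexible algebra if and only if the sixtuple (A, A*, R·*, L·*, R∘*, L∘*) is a matched pair of the q-generalized flexible algebras A and A*. -/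
import Mathlib


open Module

/-- The transpose `L∘*` on `A` of the left multiplication of a product on the dual
space `A*`, using the canonical identification `A ≃ (A*)*`. -/
noncomputable def Lcirc {K A : Type*} [Field K] [AddCommGroup A] [Module K A]
    [FiniteDimensional K A]
    (mulD : Dual K A →ₗ[K] Dual K A →ₗ[K] Dual K A) (a : Dual K A) : A →ₗ[K] A :=
  (Module.evalEquiv K A).symm.toLinearMap ∘ₗ (mulD a).dualMap
    ∘ₗ (Module.evalEquiv K A).toLinearMap

/-- The transpose `R∘*` on `A` of the right multiplication of a product on the dual
space `A*`, using the canonical identification `A ≃ (A*)*`. -/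
noncomputable def Rcirc {K A : Type*} [Field K] [AddCommGroup A] [Module K A]
    [FiniteDimensional K A]
    (mulD : Dual K A →ₗ[K] Dual K A →ₗ[K] Dual K A) (a : Dual K A) : A →ₗ[K] A :=
  (Module.evalEquiv K A).symm.toLinearMap ∘ₗ (mulD.flip a).dualMap
    ∘ₗ (Module.evalEquiv K A).toLinearMap

/-- `(A, B, lA, rA, lB, rB)` is a matched pair of the `q`-generalized flexible algebras
`(A, mulA)` and `(B, mulB)`: `(lA, rA, B)` is a bimodule of `A`, `(lB, rB, A)` is a
bimodule of `B`, and the six compatibility relations (M1)–(M6) hold. -/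
def IsMatchedPair {K A B : Type*} [Field K] [AddCommGroup A] [Module K A]
    [AddCommGroup B] [Module K B]
    (q : K) (mulA : A →ₗ[K] A →ₗ[K] A) (mulB : B →ₗ[K] B →ₗ[K] B)
    (lA rA : A → Module.End K B) (lB rB : B → Module.End K A) : Prop :=
  ((∀ x y : A, lA (mulA x y) - lA x * lA y = q • (rA x * rA y - rA (mulA y x))) ∧
   (∀ x y : A, rA x * lA y - lA y * rA x = q • (rA y * lA x - lA x * rA y)) ∧
   (∀ x y : A, rA x * rA y - rA (mulA y x) = q • (lA (mulA x y) - lA x * lA y))) ∧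
  ((∀ a b : B, lB (mulB a b) - lB a * lB b = q • (rB a * rB b - rB (mulB b a))) ∧
   (∀ a b : B, rB a * lB b - lB b * rB a = q • (rB b * lB a - lB a * rB b)) ∧
   (∀ a b : B, rB a * rB b - rB (mulB b a) = q • (lB (mulB a b) - lB a * lB b))) ∧
  (∀ (x y : A) (a : B),
    mulA (lB a x) y + lB (rA x a) y - lB a (mulA x y)
      = q • (rB a (mulA y x) - mulA y (rB a x) - rB (lA x a) y)) ∧
  (∀ (x y : A) (a : B),
    rB a (mulA x y) - mulA x (rB a y) - rB (lA y a) x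
      = q • (mulA (lB a y) x + lB (rA y a) x - lB a (mulA y x))) ∧
  (∀ (x y : A) (a : B),
    mulA (rB a x) y + lB (lA x a) y - mulA x (lB a y) - rB (rA y a) x
      = q • (mulA (rB a y) x + lB (lA y a) x - mulA y (lB a x) - rB (rA x a) y)) ∧
  (∀ (a b : B) (x : A),
    mulB (lA x a) b + lA (rB a x) b - lA x (mulB a b)
      = q • (rA x (mulB b a) - mulB b (rA x a) - rA (lB a x) b)) ∧
  (∀ (a b : B) (x : A),
    rA x (mulB a b) - mulB a (rA x b) - rA (lB b x) a
      = q • (mulB (lA x b) a + lA (rB b x) a - lA x (mulB b a))) ∧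
  (∀ (a b : B) (x : A),
    mulB (rA x a) b + lA (lB a x) b - mulB a (lA x b) - rA (rB b x) a
      = q • (mulB (rA x b) a + lA (lB b x) a - mulB b (lA x a) - rA (rB a x) b))

/-- The product `⋆` on `A ⊕ A*`:
`(x+a) ⋆ (y+b) := (x·y + R∘*(a)y + L∘*(b)x) + (a∘b + R·*(x)b + L·*(y)a)`. -/
noncomputable def starMul {K A : Type*} [Field K] [AddCommGroup A] [Module K A]
    [FiniteDimensional K A]
    (mul : A →ₗ[K] A →ₗ[K] A) (mulD : Dual K A →ₗ[K] Dual K A →ₗ[K] Dual K A) :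
    A × Dual K A → A × Dual K A → A × Dual K A :=
  fun p₁ p₂ =>
    (mul p₁.1 p₂.1 + Rcirc mulD p₁.2 p₂.1 + Lcirc mulD p₂.2 p₁.1,
     mulD p₁.2 p₂.2 + (mul.flip p₁.1).dualMap p₂.2 + (mul p₂.1).dualMap p₁.2)


section Helpers
variable {K A : Type*} [Field K] [AddCommGroup A] [Module K A] [FiniteDimensional K A]

lemma apply_Lcirc (mulD : Dual K A →ₗ[K] Dual K A →ₗ[K] Dual K A) (a : Dual K A)
    (x : A) (φ : Dual K A) : φ (Lcirc mulD a x) = mulD a φ x := by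
  have h : Module.evalEquiv K A (Lcirc mulD a x) φ
      = ((mulD a).dualMap (Module.evalEquiv K A x)) φ := by
    simp [Lcirc]
  simpa [Module.evalEquiv_apply, Module.Dual.eval_apply, LinearMap.dualMap_apply] using h

lemma apply_Rcirc (mulD : Dual K A →ₗ[K] Dual K A →ₗ[K] Dual K A) (a : Dual K A)
    (x : A) (φ : Dual K A) : φ (Rcirc mulD a x) = mulD φ a x := by
  have h : Module.evalEquiv K A (Rcirc mulD a x) φ
      = ((mulD.flip a).dualMap (Module.evalEquiv K A x)) φ := by
    simp [Rcirc]
  simpa [Module.evalEquiv_apply, Module.Dual.eval_apply, LinearMap.dualMap_apply] using h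

lemma dual_ext {u v : A} (h : ∀ φ : Dual K A, φ u = φ v) : u = v := by
  rw [← sub_eq_zero, ← Module.forall_dual_apply_eq_zero_iff K (u - v)]
  intro φ; simp [h φ]

lemma Lcirc_zero (mulD : Dual K A →ₗ[K] Dual K A →ₗ[K] Dual K A) :
    Lcirc mulD 0 = (0 : A →ₗ[K] A) := by
  refine LinearMap.ext fun x => dual_ext (K := K) fun φ => ?_
  simp [apply_Lcirc]

lemma Rcirc_zero (mulD : Dual K A →ₗ[K] Dual K A →ₗ[K] Dual K A) :
    Rcirc mulD 0 = (0 : A →ₗ[K] A) := by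
  refine LinearMap.ext fun x => dual_ext (K := K) fun φ => ?_
  simp [apply_Rcirc]

lemma dualMap_zero' : (0 : A →ₗ[K] A).dualMap = 0 := by
  refine LinearMap.ext fun φ => LinearMap.ext fun x => ?_
  simp

end Helpers

set_option maxHeartbeats 3000000 in
/-- for a finite-dimensional `q`-generalized flexible algebra `(A,·)` whose
dual `A*` carries a `q`-generalized flexible product `∘`, the product `⋆` makes `A ⊕ A*`
a `q`-generalized flexible algebra iff `(A, A*, R·*, L·*, R∘*, L∘*)` is a matched pair. -/
theorem stmt15 {K A : Type*} [Field K] [AddCommGroup A] [Module K A]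
    [FiniteDimensional K A]
    (q : K) (mul : A →ₗ[K] A →ₗ[K] A)
    (mulD : Dual K A →ₗ[K] Dual K A →ₗ[K] Dual K A)
    (hflex : ∀ x y z : A,
      mul (mul x y) z - mul x (mul y z) = q • (mul (mul z y) x - mul z (mul y x)))
    (hflexD : ∀ a b c : Dual K A,
      mulD (mulD a b) c - mulD a (mulD b c) = q • (mulD (mulD c b) a - mulD c (mulD b a))) :
    (∀ p₁ p₂ p₃ : A × Dual K A,
      starMul mul mulD (starMul mul mulD p₁ p₂) p₃
          - starMul mul mulD p₁ (starMul mul mulD p₂ p₃)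
        = q • (starMul mul mulD (starMul mul mulD p₃ p₂) p₁
            - starMul mul mulD p₃ (starMul mul mulD p₂ p₁)))
    ↔
    IsMatchedPair q mul mulD
      (fun x => (mul.flip x).dualMap) (fun x => (mul x).dualMap)
      (fun a => Rcirc mulD a) (fun a => Lcirc mulD a) := by
  constructor
  · intro H
    refine ⟨⟨?_, ?_, ?_⟩, ⟨?_, ?_, ?_⟩, ?_, ?_, ?_, ?_, ?_, ?_⟩
    · intro x y
      refine LinearMap.ext fun a => LinearMap.ext fun z => ?_
      have h := DFunLike.congr_fun (congrArg Prod.snd (H (x, 0) (y, 0) (0, a))) z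
      simp only [starMul, apply_Lcirc, apply_Rcirc, map_add, map_sub, map_smul, map_zero, Lcirc_zero, Rcirc_zero, dualMap_zero',
        LinearMap.add_apply, LinearMap.sub_apply, LinearMap.smul_apply, Module.End.mul_apply,
        LinearMap.zero_apply, LinearMap.dualMap_apply, LinearMap.flip_apply, smul_eq_mul,
        Prod.snd_sub, Prod.smul_snd, Prod.snd_add, zero_add, add_zero] at h ⊢
      linear_combination h
    · intro x y
      refine LinearMap.ext fun a => LinearMap.ext fun z => ?_
      have h := DFunLike.congr_fun (congrArg Prod.snd (H (y, 0) (0, a) (x, 0))) z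
      simp only [starMul, apply_Lcirc, apply_Rcirc, map_add, map_sub, map_smul, map_zero, Lcirc_zero, Rcirc_zero, dualMap_zero',
        LinearMap.add_apply, LinearMap.sub_apply, LinearMap.smul_apply, Module.End.mul_apply,
        LinearMap.zero_apply, LinearMap.dualMap_apply, LinearMap.flip_apply, smul_eq_mul,
        Prod.snd_sub, Prod.smul_snd, Prod.snd_add, zero_add, add_zero] at h ⊢
      linear_combination h
    · intro x y
      refine LinearMap.ext fun a => LinearMap.ext fun z => ?_
      have h := DFunLike.congr_fun (congrArg Prod.snd (H (0, a) (y, 0) (x, 0))) z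
      simp only [starMul, apply_Lcirc, apply_Rcirc, map_add, map_sub, map_smul, map_zero, Lcirc_zero, Rcirc_zero, dualMap_zero',
        LinearMap.add_apply, LinearMap.sub_apply, LinearMap.smul_apply, Module.End.mul_apply,
        LinearMap.zero_apply, LinearMap.dualMap_apply, LinearMap.flip_apply, smul_eq_mul,
        Prod.snd_sub, Prod.smul_snd, Prod.snd_add, zero_add, add_zero] at h ⊢
      linear_combination h
    · intro a b
      refine LinearMap.ext fun x => ?_
      apply dual_ext (K := K); intro φ
      have h := congrArg φ (congrArg Prod.fst (H (0, a) (0, b) (x, 0)))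
      simp only [starMul, apply_Lcirc, apply_Rcirc, map_add, map_sub, map_smul, map_zero, Lcirc_zero, Rcirc_zero, dualMap_zero',
        LinearMap.add_apply, LinearMap.sub_apply, LinearMap.smul_apply, Module.End.mul_apply,
        LinearMap.zero_apply, LinearMap.dualMap_apply, LinearMap.flip_apply, smul_eq_mul,
        Prod.fst_sub, Prod.smul_fst, Prod.fst_add, zero_add, add_zero] at h ⊢
      linear_combination h
    · intro a b
      refine LinearMap.ext fun x => ?_
      apply dual_ext (K := K); intro φ
      have h := congrArg φ (congrArg Prod.fst (H (0, b) (x, 0) (0, a)))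
      simp only [starMul, apply_Lcirc, apply_Rcirc, map_add, map_sub, map_smul, map_zero, Lcirc_zero, Rcirc_zero, dualMap_zero',
        LinearMap.add_apply, LinearMap.sub_apply, LinearMap.smul_apply, Module.End.mul_apply,
        LinearMap.zero_apply, LinearMap.dualMap_apply, LinearMap.flip_apply, smul_eq_mul,
        Prod.fst_sub, Prod.smul_fst, Prod.fst_add, zero_add, add_zero] at h ⊢
      linear_combination h
    · intro a b
      refine LinearMap.ext fun x => ?_
      apply dual_ext (K := K); intro φ
      have h := congrArg φ (congrArg Prod.fst (H (x, 0) (0, b) (0, a)))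
      simp only [starMul, apply_Lcirc, apply_Rcirc, map_add, map_sub, map_smul, map_zero, Lcirc_zero, Rcirc_zero, dualMap_zero',
        LinearMap.add_apply, LinearMap.sub_apply, LinearMap.smul_apply, Module.End.mul_apply,
        LinearMap.zero_apply, LinearMap.dualMap_apply, LinearMap.flip_apply, smul_eq_mul,
        Prod.fst_sub, Prod.smul_fst, Prod.fst_add, zero_add, add_zero] at h ⊢
      linear_combination h
    · intro x y a
      apply dual_ext (K := K); intro φ
      have h := congrArg φ (congrArg Prod.fst (H (0, a) (x, 0) (y, 0)))
      simp only [starMul, apply_Lcirc, apply_Rcirc, map_add, map_sub, map_smul, map_zero, Lcirc_zero, Rcirc_zero, dualMap_zero',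
        LinearMap.add_apply, LinearMap.sub_apply, LinearMap.smul_apply, Module.End.mul_apply,
        LinearMap.zero_apply, LinearMap.dualMap_apply, LinearMap.flip_apply, smul_eq_mul,
        Prod.fst_sub, Prod.smul_fst, Prod.fst_add, zero_add, add_zero] at h ⊢
      linear_combination h
    · intro x y a
      apply dual_ext (K := K); intro φ
      have h := congrArg φ (congrArg Prod.fst (H (x, 0) (y, 0) (0, a)))
      simp only [starMul, apply_Lcirc, apply_Rcirc, map_add, map_sub, map_smul, map_zero, Lcirc_zero, Rcirc_zero, dualMap_zero',
        LinearMap.add_apply, LinearMap.sub_apply, LinearMap.smul_apply, Module.End.mul_apply,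
        LinearMap.zero_apply, LinearMap.dualMap_apply, LinearMap.flip_apply, smul_eq_mul,
        Prod.fst_sub, Prod.smul_fst, Prod.fst_add, zero_add, add_zero] at h ⊢
      linear_combination h
    · intro x y a
      apply dual_ext (K := K); intro φ
      have h := congrArg φ (congrArg Prod.fst (H (x, 0) (0, a) (y, 0)))
      simp only [starMul, apply_Lcirc, apply_Rcirc, map_add, map_sub, map_smul, map_zero, Lcirc_zero, Rcirc_zero, dualMap_zero',
        LinearMap.add_apply, LinearMap.sub_apply, LinearMap.smul_apply, Module.End.mul_apply,
        LinearMap.zero_apply, LinearMap.dualMap_apply, LinearMap.flip_apply, smul_eq_mul,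
        Prod.fst_sub, Prod.smul_fst, Prod.fst_add, zero_add, add_zero] at h ⊢
      linear_combination h
    · intro a b x
      refine LinearMap.ext fun z => ?_
      have h := DFunLike.congr_fun (congrArg Prod.snd (H (x, 0) (0, a) (0, b))) z
      simp only [starMul, apply_Lcirc, apply_Rcirc, map_add, map_sub, map_smul, map_zero, Lcirc_zero, Rcirc_zero, dualMap_zero',
        LinearMap.add_apply, LinearMap.sub_apply, LinearMap.smul_apply, Module.End.mul_apply,
        LinearMap.zero_apply, LinearMap.dualMap_apply, LinearMap.flip_apply, smul_eq_mul,
        Prod.snd_sub, Prod.smul_snd, Prod.snd_add, zero_add, add_zero] at h ⊢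
      linear_combination h
    · intro a b x
      refine LinearMap.ext fun z => ?_
      have h := DFunLike.congr_fun (congrArg Prod.snd (H (0, a) (0, b) (x, 0))) z
      simp only [starMul, apply_Lcirc, apply_Rcirc, map_add, map_sub, map_smul, map_zero, Lcirc_zero, Rcirc_zero, dualMap_zero',
        LinearMap.add_apply, LinearMap.sub_apply, LinearMap.smul_apply, Module.End.mul_apply,
        LinearMap.zero_apply, LinearMap.dualMap_apply, LinearMap.flip_apply, smul_eq_mul,
        Prod.snd_sub, Prod.smul_snd, Prod.snd_add, zero_add, add_zero] at h ⊢
      linear_combination h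
    · intro a b x
      refine LinearMap.ext fun z => ?_
      have h := DFunLike.congr_fun (congrArg Prod.snd (H (0, a) (x, 0) (0, b))) z
      simp only [starMul, apply_Lcirc, apply_Rcirc, map_add, map_sub, map_smul, map_zero, Lcirc_zero, Rcirc_zero, dualMap_zero',
        LinearMap.add_apply, LinearMap.sub_apply, LinearMap.smul_apply, Module.End.mul_apply,
        LinearMap.zero_apply, LinearMap.dualMap_apply, LinearMap.flip_apply, smul_eq_mul,
        Prod.snd_sub, Prod.smul_snd, Prod.snd_add, zero_add, add_zero] at h ⊢
      linear_combination h
  · rintro ⟨⟨hA1, hA2, hA3⟩, ⟨hB1, hB2, hB3⟩, hM1, hM2, hM3, hM4, hM5, hM6⟩ p1 p2 p3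
    refine Prod.ext ?_ ?_
    · apply dual_ext (K := K); intro φ
      have e1 := congrArg φ (hflex p1.1 p2.1 p3.1)
      have e2 := congrArg φ (hM2 p1.1 p2.1 p3.2)
      have e3 := congrArg φ (hM3 p1.1 p3.1 p2.2)
      have e4 := congrArg φ (hM1 p2.1 p3.1 p1.2)
      have e5 := congrArg φ (DFunLike.congr_fun (hB1 p1.2 p2.2) p3.1)
      have e6 := congrArg φ (DFunLike.congr_fun (hB2 p3.2 p1.2) p2.1)
      have e7 := congrArg φ (DFunLike.congr_fun (hB3 p3.2 p2.2) p1.1)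
      simp only [starMul, apply_Lcirc, apply_Rcirc, map_add, map_sub, map_smul,
        LinearMap.add_apply, LinearMap.sub_apply, LinearMap.smul_apply, Module.End.mul_apply,
        LinearMap.dualMap_apply, LinearMap.flip_apply, smul_eq_mul,
        Prod.fst_sub, Prod.smul_fst, Prod.fst_add] at e1 e2 e3 e4 e5 e6 e7 ⊢
      linear_combination e1 + e2 + e3 + e4 + e5 + e6 + e7
    · refine LinearMap.ext fun z => ?_
      have f1 := DFunLike.congr_fun (hflexD p1.2 p2.2 p3.2) z
      have f2 := DFunLike.congr_fun (DFunLike.congr_fun (hA1 p1.1 p2.1) p3.2) z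
      have f3 := DFunLike.congr_fun (DFunLike.congr_fun (hA2 p3.1 p1.1) p2.2) z
      have f4 := DFunLike.congr_fun (DFunLike.congr_fun (hA3 p3.1 p2.1) p1.2) z
      have f5 := DFunLike.congr_fun (hM5 p1.2 p2.2 p3.1) z
      have f6 := DFunLike.congr_fun (hM6 p1.2 p3.2 p2.1) z
      have f7 := DFunLike.congr_fun (hM4 p2.2 p3.2 p1.1) z
      simp only [starMul, map_add, map_sub, map_smul,
        LinearMap.add_apply, LinearMap.sub_apply, LinearMap.smul_apply, Module.End.mul_apply,
        LinearMap.dualMap_apply, LinearMap.flip_apply, smul_eq_mul,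
        Prod.snd_sub, Prod.smul_snd, Prod.snd_add] at f1 f2 f3 f4 f5 f6 f7 ⊢
      linear_combination f1 + f2 + f3 + f4 + f5 + f6 + f7
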